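/- arXiv:1901.03931 — 9 statements merged into one kernel-verified Lean document; each statement's English description precedes it below -/
import Mathlib

section
/- There exists an instance of the capacitated flow-processing problem for which the optimal-allocation value function J₃ is not submodular. Concretely, with nodes {v₁, v₂, v₃}, each of capacity 3, and flows f₁, f₂, f₃, each of rate 2, with path sets V_{f₁} = {v₁, v₂}, V_{f₂} = {v₂, v₃}, V_{f₃} = {v₁, v₃}, one has J₃({v₂, v₃}) − J₃({v₂}) = 4 > 2 = J₃({v₃}) − J₃(∅). -/
/-- The optimal-allocation value function `J₃`: maximum total rate of fully
processed flows, over capacity-feasible assignments to VNF-nodes in `U`. -/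
noncomputable def J3 {V F : Type} [Fintype V] [Fintype F] [DecidableEq V]
    (c : V → ℝ) (rate : F → ℝ) (path : F → Finset V) (U : Finset V) : ℝ :=
  sSup {x : ℝ | ∃ a : F → V → ℝ,
    (∀ f v, 0 ≤ a f v) ∧
    (∀ f v, v ∉ path f ∩ U → a f v = 0) ∧
    (∀ v ∈ U, ∑ f, a f v ≤ c v) ∧
    x = ∑ f, if rate f ≤ ∑ v ∈ path f ∩ U, a f v then rate f else 0}

/-!
For a common rate `r`, the value of any allocation is `r` times the number of processed flows,
and it is at most the total capacity of `U`, since every processed flow receives at least its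
rate from the nodes of `U`. Hence the capacity of `U` caps the number of processed flows, and
explicit allocations attaining the cap compute `J₃` on the triangle instance:
`J₃({v₂, v₃}) = 6`, `J₃({v₂}) = J₃({v₃}) = 2` and `J₃(∅) = 0`.
-/

open scoped Finset

section Allocation

variable {V F : Type} [Fintype F] [DecidableEq V]

def IsFeasibleAlloc (c : V → ℝ) (path : F → Finset V) (U : Finset V) (a : F → V → ℝ) : Prop :=
  (∀ f v, 0 ≤ a f v) ∧ (∀ f v, v ∉ path f ∩ U → a f v = 0) ∧ ∀ v ∈ U, ∑ f, a f v ≤ c v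

noncomputable def allocValue (rate : F → ℝ) (path : F → Finset V) (U : Finset V)
    (a : F → V → ℝ) : ℝ :=
  ∑ f, if rate f ≤ ∑ v ∈ path f ∩ U, a f v then rate f else 0

theorem J3_eq_sSup_image [Fintype V] (c : V → ℝ) (rate : F → ℝ) (path : F → Finset V)
    (U : Finset V) :
    J3 c rate path U = sSup (allocValue rate path U '' {a | IsFeasibleAlloc c path U a}) := by
  unfold J3
  congr 1
  ext x
  constructor
  · rintro ⟨a, h0, hsupp, hcap, rfl⟩
    exact ⟨a, ⟨h0, hsupp, hcap⟩, rfl⟩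
  · rintro ⟨a, ⟨h0, hsupp, hcap⟩, rfl⟩
    exact ⟨a, h0, hsupp, hcap, rfl⟩

theorem allocValue_le_sum_capacity {c : V → ℝ} {rate : F → ℝ} {path : F → Finset V}
    {U : Finset V} {a : F → V → ℝ} (h0 : ∀ f v, 0 ≤ a f v) (hcap : ∀ v ∈ U, ∑ f, a f v ≤ c v) :
    allocValue rate path U a ≤ ∑ v ∈ U, c v :=
  calc allocValue rate path U a
      ≤ ∑ f, ∑ v ∈ path f ∩ U, a f v := by
        refine Finset.sum_le_sum fun f _ => ?_
        split_ifs with h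
        · exact h
        · exact Finset.sum_nonneg fun v _ => h0 f v
    _ ≤ ∑ f, ∑ v ∈ U, a f v :=
        Finset.sum_le_sum fun f _ =>
          Finset.sum_le_sum_of_subset_of_nonneg Finset.inter_subset_right fun v _ _ => h0 f v
    _ = ∑ v ∈ U, ∑ f, a f v := Finset.sum_comm
    _ ≤ ∑ v ∈ U, c v := Finset.sum_le_sum hcap

theorem allocValue_const_rate (r : ℝ) (path : F → Finset V) (U : Finset V) (a : F → V → ℝ) :
    allocValue (fun _ => r) path U a
      = #{f | r ≤ ∑ v ∈ path f ∩ U, a f v} * r := by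
  simp [allocValue, Finset.sum_ite]

theorem allocValue_const_rate_le {c : V → ℝ} {r : ℝ} {path : F → Finset V} {U : Finset V}
    {a : F → V → ℝ} (hr : 0 < r) {k : ℕ} (hU : ∑ v ∈ U, c v < (k + 1) * r)
    (h0 : ∀ f v, 0 ≤ a f v) (hcap : ∀ v ∈ U, ∑ f, a f v ≤ c v) :
    allocValue (fun _ => r) path U a ≤ k * r := by
  have hle := allocValue_le_sum_capacity (rate := fun _ => r) (path := path) h0 hcap
  rw [allocValue_const_rate] at hle ⊢
  have hcard_lt : (#{f | r ≤ ∑ v ∈ path f ∩ U, a f v} : ℝ) < k + 1 :=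
    lt_of_mul_lt_mul_right (hle.trans_lt hU) hr.le
  have hcard : #{f | r ≤ ∑ v ∈ path f ∩ U, a f v} ≤ k := Nat.lt_succ_iff.mp (mod_cast hcard_lt)
  gcongr

theorem J3_const_rate_eq [Fintype V] {c : V → ℝ} {r : ℝ} {path : F → Finset V} {U : Finset V}
    (hr : 0 < r) {k : ℕ} (hU : ∑ v ∈ U, c v < (k + 1) * r) {a : F → V → ℝ}
    (ha : IsFeasibleAlloc c path U a) (hval : allocValue (fun _ => r) path U a = k * r) :
    J3 c (fun _ => r) path U = k * r := by
  rw [J3_eq_sSup_image]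
  refine IsGreatest.csSup_eq ⟨⟨a, ha, hval⟩, ?_⟩
  rintro _ ⟨b, ⟨h0, -, hcap⟩, rfl⟩
  exact allocValue_const_rate_le hr hU h0 hcap

end Allocation

namespace Triangle

abbrev cap : Fin 3 → ℝ := fun _ => 3

abbrev path : Fin 3 → Finset (Fin 3) := ![{0, 1}, {1, 2}, {0, 2}]

/-- Splitting flow `1` evenly between nodes `1` and `2` leaves each of them room for one more
flow (indices start at `0`: node `1` is the paper's `v₂`). -/
theorem J3_pair : J3 cap (fun _ => 2) path {1, 2} = 6 := by
  refine (J3_const_rate_eq (k := 3) (a := ![![0, 2, 0], ![0, 1, 1], ![0, 0, 2]]) two_pos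
    ?_ ⟨?_, ?_, ?_⟩ ?_).trans (by norm_num)
  · rw [Finset.sum_pair (by decide)]; norm_num
  · intro f v; fin_cases f <;> fin_cases v <;> simp
  · intro f v; fin_cases f <;> fin_cases v <;> simp
  · intro v hv; fin_cases hv <;> norm_num [Fin.sum_univ_three, Matrix.cons_val_two]
  · simp [allocValue, Fin.sum_univ_three, Matrix.cons_val]; norm_num

theorem J3_singleton_one : J3 cap (fun _ => 2) path {1} = 2 := by
  refine (J3_const_rate_eq (k := 1) (a := ![![0, 2, 0], 0, 0]) two_pos
    ?_ ⟨?_, ?_, ?_⟩ ?_).trans (by norm_num)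
  · norm_num
  · intro f v; fin_cases f <;> fin_cases v <;> simp
  · intro f v; fin_cases f <;> fin_cases v <;> simp
  · intro v hv; fin_cases hv; norm_num [Fin.sum_univ_three, Matrix.cons_val_two]
  · simp [allocValue, Fin.sum_univ_three, Matrix.cons_val]; norm_num

theorem J3_singleton_two : J3 cap (fun _ => 2) path {2} = 2 := by
  refine (J3_const_rate_eq (k := 1) (a := ![0, ![0, 0, 2], 0]) two_pos
    ?_ ⟨?_, ?_, ?_⟩ ?_).trans (by norm_num)
  · norm_num
  · intro f v; fin_cases f <;> fin_cases v <;> simp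
  · intro f v; fin_cases f <;> fin_cases v <;> simp
  · intro v hv; fin_cases hv; norm_num [Fin.sum_univ_three, Matrix.cons_val_two]
  · simp [allocValue, Fin.sum_univ_three, Matrix.cons_val]; norm_num

theorem J3_empty : J3 cap (fun _ => 2) path ∅ = 0 := by
  refine (J3_const_rate_eq (k := 0) (a := 0) two_pos ?_
    ⟨fun _ _ => le_rfl, fun _ _ _ => rfl, by simp⟩ ?_).trans (by norm_num)
  · norm_num
  · simp [allocValue]

end Triangle

/-- The three-node, three-flow instance (capacities 3, rates 2, triangle paths)
witnesses non-submodularity of `J₃`: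
`J₃({v₂,v₃}) − J₃({v₂}) = 4 > 2 = J₃({v₃}) − J₃(∅)`. -/
theorem J3_not_submodular_instance :
    let c : Fin 3 → ℝ := fun _ => 3
    let rate : Fin 3 → ℝ := fun _ => 2
    let path : Fin 3 → Finset (Fin 3) := ![{0, 1}, {1, 2}, {0, 2}]
    J3 c rate path {1, 2} - J3 c rate path {1} = 4 ∧
    J3 c rate path {2} - J3 c rate path (∅ : Finset (Fin 3)) = 2 ∧
    (4 : ℝ) > 2 := by
  intro c rate path
  have h12 : J3 c rate path {1, 2} = 6 := Triangle.J3_pair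
  have h1 : J3 c rate path {1} = 2 := Triangle.J3_singleton_one
  have h2 : J3 c rate path {2} = 2 := Triangle.J3_singleton_two
  have h0 : J3 c rate path ∅ = 0 := Triangle.J3_empty
  refine ⟨?_, ?_, by norm_num⟩ <;> linarith
end

section
/- For the instance with nodes {v₁, v₂, v₃} of capacity 3 and flows f₁, f₂, f₃ of rate 2 with paths V_{f₁} = {v₁, v₂}, V_{f₂} = {v₂, v₃}, V_{f₃} = {v₁, v₃}: if only one node is a VNF-node, the maximum total fully processed traffic is exactly 2; if all three nodes are VNF-nodes, all three flows can be fully processed, achieving total 6. -/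
section Aux

noncomputable abbrev tpath : Fin 3 → Finset (Fin 3) := ![{0, 1}, {1, 2}, {0, 2}]

lemma mem_single (v f₀ : Fin 3) (hv : v ∈ tpath f₀) :
    (2:ℝ) ∈ {x : ℝ | ∃ a : Fin 3 → Fin 3 → ℝ,
      (∀ f w, 0 ≤ a f w) ∧
      (∀ f w, w ∉ tpath f ∩ ({v} : Finset (Fin 3)) → a f w = 0) ∧
      (∀ w ∈ ({v} : Finset (Fin 3)), ∑ f, a f w ≤ 3) ∧
      x = ∑ f, if (2:ℝ) ≤ ∑ w ∈ tpath f ∩ {v}, a f w then 2 else 0} := by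
  refine ⟨fun f w => if f = f₀ ∧ w = v then 2 else 0, ?_, ?_, ?_, ?_⟩
  · intro f w; dsimp only; split_ifs <;> norm_num
  · intro f w hw
    dsimp only
    split_ifs with h
    · obtain ⟨rfl, rfl⟩ := h
      exact absurd (Finset.mem_inter.2 ⟨hv, Finset.mem_singleton_self _⟩) hw
    · rfl
  · intro w hw
    rw [Finset.mem_singleton] at hw
    subst hw
    rw [Fin.sum_univ_three]
    dsimp only
    split_ifs <;> norm_num <;> omega
  · have key : ∀ f : Fin 3,
        (if (2:ℝ) ≤ ∑ w ∈ tpath f ∩ {v}, (if f = f₀ ∧ w = v then (2:ℝ) else 0) then (2:ℝ) else 0)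
        = if f = f₀ then 2 else 0 := by
      intro f
      by_cases hf : f = f₀
      · subst hf
        rw [Finset.inter_singleton_of_mem hv, Finset.sum_singleton]
        simp
      · have : ∀ w ∈ tpath f ∩ ({v} : Finset (Fin 3)),
            (if f = f₀ ∧ w = v then (2:ℝ) else 0) = 0 := by
          intro w _; simp [hf]
        rw [Finset.sum_congr rfl this]
        simp [hf]
    rw [Fintype.sum_congr _ _ key, Finset.sum_ite_eq' Finset.univ f₀]
    simp

lemma J3_single (v : Fin 3) :
    J3 (fun _ => (3:ℝ)) (fun _ => (2:ℝ)) tpath {v} = 2 := by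
  have hex : ∃ f₀ : Fin 3, v ∈ tpath f₀ := by fin_cases v <;> decide
  obtain ⟨f₀, hf₀⟩ := hex
  apply IsGreatest.csSup_eq
  constructor
  · exact mem_single v f₀ hf₀
  · rintro x ⟨a, ha0, hout, hcap, rfl⟩
    have hc : ∀ f : Fin 3, ∑ w ∈ tpath f ∩ {v}, a f w ≤ a f v := by
      intro f
      have : ∑ w ∈ tpath f ∩ {v}, a f w ≤ ∑ w ∈ ({v} : Finset (Fin 3)), a f w := by
        apply Finset.sum_le_sum_of_subset_of_nonneg (Finset.inter_subset_right)
        intro w _ _; exact ha0 f w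
      simpa using this
    have hcv : a 0 v + a 1 v + a 2 v ≤ 3 := by
      have := hcap v (Finset.mem_singleton_self v)
      rwa [Fin.sum_univ_three] at this
    rw [Fin.sum_univ_three]
    dsimp only
    have h0 := hc 0; have h1 := hc 1; have h2 := hc 2
    have n0 := ha0 0 v; have n1 := ha0 1 v; have n2 := ha0 2 v
    split_ifs <;> linarith

lemma J3_full :
    J3 (fun _ => (3:ℝ)) (fun _ => (2:ℝ)) tpath (Finset.univ : Finset (Fin 3)) = 6 := by
  apply IsGreatest.csSup_eq
  constructor
  · refine ⟨fun f w => if w ∈ tpath f then 1 else 0, ?_, ?_, ?_, ?_⟩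
    · intro f w; dsimp only; split_ifs <;> norm_num
    · intro f w hw
      rw [Finset.inter_univ] at hw
      simp [hw]
    · intro w _
      calc ∑ f : Fin 3, (if w ∈ tpath f then (1:ℝ) else 0)
          ≤ ∑ f : Fin 3, (1:ℝ) := by
            apply Finset.sum_le_sum; intro f _; split_ifs <;> norm_num
        _ = 3 := by simp
    · have key : ∀ f : Fin 3,
          (if (2:ℝ) ≤ ∑ w ∈ tpath f ∩ Finset.univ, (if w ∈ tpath f then (1:ℝ) else 0) then (2:ℝ) else 0) = 2 := by
        intro f
        rw [Finset.inter_univ]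
        have hs : ∑ w ∈ tpath f, (if w ∈ tpath f then (1:ℝ) else 0) = (tpath f).card := by
          rw [Finset.sum_congr rfl (fun w hw => if_pos hw)]
          simp
        rw [hs]
        have : (tpath f).card = 2 := by fin_cases f <;> decide
        rw [this]; norm_num
      rw [Fintype.sum_congr _ _ key, Fin.sum_univ_three]
      norm_num
  · rintro x ⟨a, ha0, hout, hcap, rfl⟩
    calc (∑ f : Fin 3, if (2:ℝ) ≤ ∑ w ∈ tpath f ∩ Finset.univ, a f w then 2 else 0)
        ≤ ∑ f : Fin 3, (2:ℝ) := by
          apply Finset.sum_le_sum; intro f _; split_ifs <;> norm_num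
      _ = 6 := by simp; norm_num

end Aux

/-- In the triangle instance (capacities 3, rates 2, paths {v₁,v₂}, {v₂,v₃},
{v₁,v₃}): with a single VNF-node the optimum is exactly 2, and with all three
nodes all three flows are fully processed, achieving 6. -/
theorem J3_singleton_and_full :
    let c : Fin 3 → ℝ := fun _ => 3
    let rate : Fin 3 → ℝ := fun _ => 2
    let path : Fin 3 → Finset (Fin 3) := ![{0, 1}, {1, 2}, {0, 2}]
    (∀ v : Fin 3, J3 c rate path {v} = 2) ∧
    J3 c rate path (Finset.univ : Finset (Fin 3)) = 6 := by
  dsimp only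
  exact ⟨J3_single, J3_full⟩
end

section
/- Let G be a finite directed graph with edge capacities c : E → ℝ≥0 and a distinguished source s. For each subset U of vertices not containing s, define R(U) = min over vertex sets X with s ∈ X and U ∩ X = ∅ of the total capacity of edges from X to its complement. Then R is a submodular function of U. -/
/-- Min-cut value separating the source `s` from a variable sink set `U`:
the minimum over vertex sets `X` containing `s` and disjoint from `U` of the
total capacity of edges leaving `X`. -/
noncomputable def minCut {V : Type} [Fintype V] [DecidableEq V]
    (c : V → V → ℝ) (s : V) (U : Finset V) : ℝ :=
  sInf {x : ℝ | ∃ X : Finset V, s ∈ X ∧ Disjoint U X ∧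
    x = ∑ a ∈ X, ∑ b ∈ Xᶜ, c a b}

section Aux

variable {V : Type} [Fintype V] [DecidableEq V]

/-- Cut value of a vertex set. -/
noncomputable def cutval (c : V → V → ℝ) (X : Finset V) : ℝ :=
  ∑ a ∈ X, ∑ b ∈ Xᶜ, c a b

lemma cutval_eq (c : V → V → ℝ) (X : Finset V) :
    cutval c X = ∑ a ∈ Finset.univ, ∑ b ∈ Finset.univ,
      (if a ∈ X then (if b ∈ X then 0 else c a b) else 0) := by
  rw [cutval]
  rw [← Finset.sum_subset (Finset.subset_univ X)
    (fun x _ hx => by simp [hx])]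
  refine Finset.sum_congr rfl fun a ha => ?_
  rw [← Finset.sum_subset (Finset.subset_univ Xᶜ)
    (fun b _ hb => by simp [Finset.mem_compl] at hb; simp [ha, hb])]
  refine Finset.sum_congr rfl fun b hb => ?_
  rw [Finset.mem_compl] at hb
  simp [ha, hb]

lemma cutval_nonneg (c : V → V → ℝ) (hc : ∀ a b, 0 ≤ c a b) (X : Finset V) :
    0 ≤ cutval c X := by
  apply Finset.sum_nonneg
  intro a _
  exact Finset.sum_nonneg fun b _ => hc a b

lemma cutval_submodular (c : V → V → ℝ) (hc : ∀ a b, 0 ≤ c a b)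
    (X Y : Finset V) :
    cutval c (X ∩ Y) + cutval c (X ∪ Y) ≤ cutval c X + cutval c Y := by
  simp only [cutval_eq, ← Finset.sum_add_distrib]
  refine Finset.sum_le_sum fun a _ => Finset.sum_le_sum fun b _ => ?_
  by_cases haX : a ∈ X <;> by_cases haY : a ∈ Y <;>
    by_cases hbX : b ∈ X <;> by_cases hbY : b ∈ Y <;>
    simp [Finset.mem_inter, Finset.mem_union, haX, haY, hbX, hbY] <;>
    linarith [hc a b]

lemma minCut_le (c : V → V → ℝ) (hc : ∀ a b, 0 ≤ c a b) (s : V)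
    (U X : Finset V) (hs : s ∈ X) (hd : Disjoint U X) :
    minCut c s U ≤ cutval c X := by
  apply csInf_le
  · refine ⟨0, fun x hx => ?_⟩
    obtain ⟨X', _, _, rfl⟩ := hx
    exact cutval_nonneg c hc X'
  · exact ⟨X, hs, hd, rfl⟩

lemma minCut_attained (c : V → V → ℝ) (s : V) (U : Finset V) (hs : s ∉ U) :
    ∃ X : Finset V, s ∈ X ∧ Disjoint U X ∧ minCut c s U = cutval c X := by
  have hS : {x : ℝ | ∃ X : Finset V, s ∈ X ∧ Disjoint U X ∧
      x = ∑ a ∈ X, ∑ b ∈ Xᶜ, c a b} =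
      (fun X : Finset V => cutval c X) '' {X | s ∈ X ∧ Disjoint U X} := by
    ext x
    simp [cutval, eq_comm, and_assoc]
  have hne : {x : ℝ | ∃ X : Finset V, s ∈ X ∧ Disjoint U X ∧
      x = ∑ a ∈ X, ∑ b ∈ Xᶜ, c a b}.Nonempty :=
    ⟨_, {s}, Finset.mem_singleton_self s, by simp [hs], rfl⟩
  have hfin : {x : ℝ | ∃ X : Finset V, s ∈ X ∧ Disjoint U X ∧
      x = ∑ a ∈ X, ∑ b ∈ Xᶜ, c a b}.Finite := by
    rw [hS]; exact Set.Finite.image _ (Set.toFinite _)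
  have := hne.csInf_mem hfin
  obtain ⟨X, hsX, hdX, hx⟩ := this
  exact ⟨X, hsX, hdX, hx⟩

end Aux

/-- The min-cut value, as a function of the sink set `U` (not containing `s`),
is submodular: for `U₁ ⊆ U₂` with `s ∉ U₂` and `v ∉ U₂`, `v ≠ s`,
`R(U₁ ∪ {v}) − R(U₁) ≥ R(U₂ ∪ {v}) − R(U₂)`. -/
theorem minCut_submodular {V : Type} [Fintype V] [DecidableEq V]
    (c : V → V → ℝ) (hc : ∀ a b, 0 ≤ c a b) (s : V) :
    ∀ U₁ U₂ : Finset V, ∀ v : V, U₁ ⊆ U₂ → s ∉ U₂ → v ∉ U₂ → v ≠ s →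
      minCut c s (insert v U₂) - minCut c s U₂ ≤
        minCut c s (insert v U₁) - minCut c s U₁ := by
  intro U₁ U₂ v hsub hsU₂ hvU₂ hvs
  have hsU₁ : s ∉ U₁ := fun h => hsU₂ (hsub h)
  have hsI : s ∉ insert v U₁ := by
    simp [Finset.mem_insert, hsU₁, Ne.symm hvs]
  obtain ⟨X, hsX, hdX, hX⟩ := minCut_attained c s U₂ hsU₂
  obtain ⟨Y, hsY, hdY, hY⟩ := minCut_attained c s (insert v U₁) hsI
  have hvY : v ∉ Y := Finset.disjoint_left.mp hdY (Finset.mem_insert_self v U₁)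
  have hU₁Y : Disjoint U₁ Y :=
    Finset.disjoint_of_subset_left (Finset.subset_insert v U₁) hdY
  have hU₁X : Disjoint U₁ X := Finset.disjoint_of_subset_left hsub hdX
  -- X ∩ Y feasible for insert v U₂
  have h1 : minCut c s (insert v U₂) ≤ cutval c (X ∩ Y) := by
    apply minCut_le c hc
    · exact Finset.mem_inter.mpr ⟨hsX, hsY⟩
    · rw [Finset.disjoint_left]
      intro a ha haXY
      rw [Finset.mem_inter] at haXY
      rcases Finset.mem_insert.mp ha with rfl | ha
      · exact hvY haXY.2
      · exact Finset.disjoint_left.mp hdX ha haXY.1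
  -- X ∪ Y feasible for U₁
  have h2 : minCut c s U₁ ≤ cutval c (X ∪ Y) := by
    apply minCut_le c hc
    · exact Finset.mem_union_left _ hsX
    · exact Finset.disjoint_union_right.mpr ⟨hU₁X, hU₁Y⟩
  have h3 := cutval_submodular c hc X Y
  linarith [h1, h2, h3, hX.symm ▸ le_refl (minCut c s U₂)]
end

section
/- Equivalence of the relaxed allocation problem and a maximum net-flow problem: for any U ⊆ V, the optimal value R₃(U) of the relaxed capacity allocation LP equals the maximum total net-flow into the sinks corresponding to U in the constructed graph Z with source s, flow-vertices f ∈ F, intermediate node-vertices v′, and sink node-vertices v, where edge (s,f) has capacity λ_f, edge (f, v′) exists iff v ∈ V_f with capacity λ_f, and edge (v′, v) has capacity c_v. -/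
/-- Vertices of the constructed graph `Z`: the source, flow-vertices,
intermediate node-vertices `v′`, and sink node-vertices `v`. -/
abbrev ZVert (F V : Type) := Unit ⊕ F ⊕ V ⊕ V

def src {F V : Type} : ZVert F V := Sum.inl ()
def flowv {F V : Type} (f : F) : ZVert F V := Sum.inr (Sum.inl f)
def midv {F V : Type} (v : V) : ZVert F V := Sum.inr (Sum.inr (Sum.inl v))
def sinkv {F V : Type} (v : V) : ZVert F V := Sum.inr (Sum.inr (Sum.inr v))

/-- Edge capacities of `Z`: `(s,f)` has capacity `λ_f`; `(f,v′)` exists iff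
`v ∈ V_f`, with capacity `λ_f`; `(v′,v)` has capacity `c_v`; all other pairs 0. -/
def zcap {F V : Type} [DecidableEq V] (c : V → ℝ) (rate : F → ℝ)
    (path : F → Finset V) : ZVert F V → ZVert F V → ℝ
  | Sum.inl _, Sum.inr (Sum.inl f) => rate f
  | Sum.inr (Sum.inl f), Sum.inr (Sum.inr (Sum.inl v)) =>
      if v ∈ path f then rate f else 0
  | Sum.inr (Sum.inr (Sum.inl v)), Sum.inr (Sum.inr (Sum.inr w)) =>
      if v = w then c v else 0
  | _, _ => 0

/-- Net-flow into a vertex. -/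
noncomputable def netAt {F V : Type} [Fintype F] [Fintype V]
    (φ : ZVert F V → ZVert F V → ℝ) (x : ZVert F V) : ℝ :=
  (∑ y, φ y x) - (∑ y, φ x y)

/-- An `s`-`V` flow on `Z`: capacity constraints, conservation at non-source
non-sink vertices, non-positive net-flow at the source, non-negative net-flow
at the sinks. -/
def IsSVFlow {F V : Type} [Fintype F] [Fintype V] [DecidableEq V]
    (c : V → ℝ) (rate : F → ℝ) (path : F → Finset V)
    (φ : ZVert F V → ZVert F V → ℝ) : Prop :=
  (∀ x y, 0 ≤ φ x y) ∧
  (∀ x y, φ x y ≤ zcap c rate path x y) ∧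
  (∀ f : F, netAt φ (flowv f) = 0) ∧
  (∀ v : V, netAt φ (midv v) = 0) ∧
  netAt φ (src : ZVert F V) ≤ 0 ∧
  (∀ v : V, 0 ≤ netAt φ (sinkv v))

/-- Maximum total net-flow at the sinks corresponding to `U`. -/
noncomputable def maxNetFlow {F V : Type} [Fintype F] [Fintype V] [DecidableEq V]
    (c : V → ℝ) (rate : F → ℝ) (path : F → Finset V) (U : Finset V) : ℝ :=
  sSup {x : ℝ | ∃ φ : ZVert F V → ZVert F V → ℝ,
    IsSVFlow c rate path φ ∧ x = ∑ v ∈ U, netAt φ (sinkv v)}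

/-- The relaxed allocation objective `R₃(U)`. -/
noncomputable def R3 {V F : Type} [Fintype V] [Fintype F] [DecidableEq V]
    (c : V → ℝ) (rate : F → ℝ) (path : F → Finset V) (U : Finset V) : ℝ :=
  sSup {x : ℝ | ∃ a : F → V → ℝ,
    (∀ f v, 0 ≤ a f v) ∧
    (∀ f v, v ∉ path f ∩ U → a f v = 0) ∧
    (∀ v ∈ U, ∑ f, a f v ≤ c v) ∧
    (∀ f, ∑ v, a f v ≤ rate f) ∧
    x = ∑ f, ∑ v ∈ path f ∩ U, a f v}

set_option linter.unusedSectionVars false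
section Aux

variable {F V : Type} [Fintype F] [Fintype V] [DecidableEq V]

lemma sum_zvert (g : ZVert F V → ℝ) :
    ∑ x, g x = g src + ((∑ f, g (flowv f)) + ((∑ v, g (midv v)) + ∑ v, g (sinkv v))) := by
  simp [Fintype.sum_sum_type, src, flowv, midv, sinkv]

/-- A three-layer flow determined by its values on the three edge families. -/
def mkflow (A : F → ℝ) (B : F → V → ℝ) (C : V → ℝ) : ZVert F V → ZVert F V → ℝ
  | Sum.inl _, Sum.inr (Sum.inl f) => A f
  | Sum.inr (Sum.inl f), Sum.inr (Sum.inr (Sum.inl v)) => B f v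
  | Sum.inr (Sum.inr (Sum.inl v)), Sum.inr (Sum.inr (Sum.inr w)) => if v = w then C v else 0
  | _, _ => 0

variable (A : F → ℝ) (B : F → V → ℝ) (C : V → ℝ)

lemma mkflow_netAt_src : netAt (mkflow A B C) (src : ZVert F V) = -(∑ f, A f) := by
  simp [netAt, sum_zvert, mkflow, src, flowv, midv, sinkv]

lemma mkflow_netAt_flowv (f : F) : netAt (mkflow A B C) (flowv f : ZVert F V) = A f - ∑ v, B f v := by
  simp [netAt, sum_zvert, mkflow, src, flowv, midv, sinkv]

lemma mkflow_netAt_midv (v : V) : netAt (mkflow A B C) (midv v : ZVert F V) = (∑ f, B f v) - C v := by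
  simp [netAt, sum_zvert, mkflow, src, flowv, midv, sinkv]

lemma mkflow_netAt_sinkv (v : V) : netAt (mkflow A B C) (sinkv v : ZVert F V) = C v := by
  simp [netAt, sum_zvert, mkflow, src, flowv, midv, sinkv]

end Aux
/-- Equivalence of the relaxed allocation problem and the maximum net-flow
problem on the constructed graph `Z`: `R₃(U) = F(U)` for every `U ⊆ V`. -/
theorem R3_eq_maxNetFlow {F V : Type} [Fintype F] [Fintype V] [DecidableEq V]
    (c : V → ℝ) (hc : ∀ v, 0 ≤ c v) (rate : F → ℝ) (hrate : ∀ f, 0 ≤ rate f)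
    (path : F → Finset V) (U : Finset V) :
    R3 c rate path U = maxNetFlow c rate path U := by
  unfold R3 maxNetFlow
  congr 1
  ext x
  simp only [Set.mem_setOf_eq]
  constructor
  · rintro ⟨a, ha0, haz, hacap, harate, hx⟩
    refine ⟨mkflow (fun f => ∑ v, a f v) a (fun v => ∑ f, a f v), ⟨?_, ?_, ?_, ?_, ?_, ?_⟩, ?_⟩
    · rintro (_ | f | v | v) (_ | g | w | w) <;>
        simp only [mkflow, le_refl] <;>
        first
          | exact Finset.sum_nonneg fun _ _ => ha0 _ _
          | exact ha0 _ _
          | (split <;> [exact Finset.sum_nonneg fun _ _ => ha0 _ _; exact le_rfl])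
    · rintro (_ | f | v | v) (_ | g | w | w) <;> simp only [mkflow, zcap, le_refl]
      · exact harate g
      · by_cases hp : w ∈ path f
        · simp only [hp, if_true]
          exact le_trans (Finset.single_le_sum (fun v _ => ha0 f v) (Finset.mem_univ w))
            (harate f)
        · simp only [hp, if_false]
          exact le_of_eq (haz f w (by simp [hp]))
      · split
        · next h =>
            subst h
            by_cases hU : v ∈ U
            · exact hacap v hU
            · calc ∑ f, a f v = 0 := Finset.sum_eq_zero (fun f _ => haz f v (by simp [hU]))
                _ ≤ c v := hc v
        · exact le_rfl
    · intro f
      rw [mkflow_netAt_flowv]; ring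
    · intro v
      rw [mkflow_netAt_midv]; ring
    · rw [mkflow_netAt_src]
      simp only [neg_nonpos]
      exact Finset.sum_nonneg fun f _ => Finset.sum_nonneg fun v _ => ha0 _ _
    · intro v
      rw [mkflow_netAt_sinkv]
      exact Finset.sum_nonneg fun f _ => ha0 _ _
    · rw [hx]
      simp only [mkflow_netAt_sinkv]
      rw [Finset.sum_comm]
      refine Finset.sum_congr rfl (fun f _ => ?_)
      exact Finset.sum_subset (Finset.inter_subset_right)
        (fun v hv hnv => haz f v hnv)
  · rintro ⟨φ, ⟨h0, hcap, hfl, hmid, hsrc, hsk⟩, hx⟩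
    have hzero : ∀ x y, zcap c rate path x y = 0 → φ x y = 0 :=
      fun x y h => le_antisymm (h ▸ hcap x y) (h0 x y)
    have hφeq : φ = mkflow (fun f => φ src (flowv f)) (fun f v => φ (flowv f) (midv v))
        (fun v => φ (midv v) (sinkv v)) := by
      funext p q
      rcases p with _ | f | v | v <;> rcases q with _ | g | w | w <;>
        first
          | rfl
          | exact hzero _ _ rfl
          | skip
      by_cases h : v = w
      · subst h; simp [mkflow, midv, sinkv]
      · have hz : φ (midv v) (sinkv w) = 0 := hzero _ _ (by simp [zcap, midv, sinkv, h])
        simpa [mkflow, midv, sinkv, h] using hz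
    set A : F → ℝ := fun f => φ src (flowv f) with hA
    set B : F → V → ℝ := fun f v => φ (flowv f) (midv v) with hB
    set C : V → ℝ := fun v => φ (midv v) (sinkv v) with hC
    have hBrate : ∀ f, ∑ v, B f v ≤ rate f := by
      intro f
      have h1 : A f - ∑ v, B f v = 0 := by
        have h := hfl f; rw [hφeq, mkflow_netAt_flowv] at h; exact h
      have h2 : A f ≤ rate f := hcap src (flowv f)
      linarith
    have hCB : ∀ v, (∑ f, B f v) = C v := by
      intro v
      have h := hmid v; rw [hφeq, mkflow_netAt_midv] at h; linarith
    refine ⟨fun f v => if v ∈ U then B f v else 0, ?_, ?_, ?_, ?_, ?_⟩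
    · intro f v; dsimp only; split
      · exact h0 _ _
      · exact le_rfl
    · intro f v hv
      dsimp only; split
      · next hU =>
          have hp : v ∉ path f := fun hp => hv (Finset.mem_inter.mpr ⟨hp, hU⟩)
          exact hzero _ _ (by simp [zcap, flowv, midv, hp])
      · rfl
    · intro v hv
      dsimp only; simp only [hv, if_true]
      rw [hCB v]
      exact (hcap (midv v) (sinkv v)).trans (by simp [zcap, midv, sinkv])
    · intro f
      refine le_trans (Finset.sum_le_sum (fun v _ => ?_)) (hBrate f)
      dsimp only; split
      · exact le_rfl
      · exact h0 _ _
    · rw [hx]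
      have hnet : ∀ v, netAt φ (sinkv v) = C v := fun v => by
        rw [hφeq, mkflow_netAt_sinkv]
      simp only [hnet]
      calc ∑ v ∈ U, C v = ∑ v ∈ U, ∑ f, B f v :=
            Finset.sum_congr rfl (fun v _ => (hCB v).symm)
        _ = ∑ f, ∑ v ∈ U, B f v := Finset.sum_comm
        _ = ∑ f, ∑ v ∈ path f ∩ U, (if v ∈ U then B f v else 0) := by
            refine Finset.sum_congr rfl (fun f _ => ?_)
            rw [← Finset.sum_subset (Finset.inter_subset_right)
              (fun v hv hnv => ?_)]
            · refine Finset.sum_congr rfl (fun v hv => ?_)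
              simp [(Finset.mem_inter.mp hv).2]
            · have hp : v ∉ path f := fun hp => hnv (Finset.mem_inter.mpr ⟨hp, hv⟩)
              exact hzero _ _ (by simp [zcap, flowv, midv, hp])
end

section
/- After Phase I of the greedy capacity allocation (GCA) algorithm, for every unassigned flow f and every VNF-node u on the path of f within the chosen set U, the total traffic r_u assigned to u satisfies r_u ≥ c_u / 2. -/
/-- Half-capacity lemma for Phase I of the GCA algorithm. Flows `Fin n` are
processed in nonincreasing rate order; `asg f = some u` records that flow `f`
was wholly assigned to node `u`. If flow `f` ended up unassigned, then every
node `u` on its path within `U` is at least half full. -/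
theorem gca_half_capacity {V : Type} [Fintype V] [DecidableEq V] (n : ℕ)
    (rate : Fin n → ℝ) (c : V → ℝ) (path : Fin n → Finset V) (U : Finset V)
    (asg : Fin n → Option V)
    (hrate0 : ∀ f, 0 ≤ rate f)
    -- flows are listed in nonincreasing order of their rates
    (hmono : ∀ i j : Fin n, i ≤ j → rate j ≤ rate i)
    -- every flow rate is at most the capacity of any VNF-node
    (hcap : ∀ f : Fin n, ∀ u ∈ U, rate f ≤ c u)
    -- assignments go only to path nodes within U
    (hasg : ∀ f u, asg f = some u → u ∈ path f ∩ U)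
    -- capacity feasibility of the final assignment
    (hload : ∀ u ∈ U,
      (∑ g ∈ Finset.univ.filter (fun g => asg g = some u), rate g) ≤ c u)
    -- greedy property: an unassigned flow did not fit on any of its path
    -- nodes at its turn (given the load of earlier-processed flows)
    (hgreedy : ∀ f : Fin n, asg f = none → ∀ u ∈ path f ∩ U,
      c u < (∑ g ∈ Finset.univ.filter (fun g => g < f ∧ asg g = some u), rate g)
              + rate f) :
    ∀ f : Fin n, asg f = none → ∀ u ∈ path f ∩ U,
      c u / 2 ≤ ∑ g ∈ Finset.univ.filter (fun g => asg g = some u), rate g := by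
  intro f hf u hu
  by_contra h
  push_neg at h
  have huU : u ∈ U := (Finset.mem_inter.mp hu).2
  set S := ∑ g ∈ Finset.univ.filter (fun g => asg g = some u), rate g with hS
  set E := ∑ g ∈ Finset.univ.filter (fun g => g < f ∧ asg g = some u), rate g with hE
  have hES : E ≤ S := by
    apply Finset.sum_le_sum_of_subset_of_nonneg
    · intro g hg
      simp only [Finset.mem_filter] at hg ⊢
      exact ⟨hg.1, hg.2.2⟩
    · intro g _ _; exact hrate0 g
  have hg1 := hgreedy f hf u hu
  by_cases hne : (Finset.univ.filter (fun g => g < f ∧ asg g = some u)).Nonempty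
  · obtain ⟨g, hg⟩ := hne
    simp only [Finset.mem_filter] at hg
    have hgf : rate f ≤ rate g := hmono g f (le_of_lt hg.2.1)
    have hgE : rate g ≤ E := by
      apply Finset.single_le_sum (f := rate) (fun i _ => hrate0 i)
      simp only [Finset.mem_filter]
      exact hg
    -- rate f > c u - E and rate g ≤ E ≤ S < c u / 2
    have h1 : c u - E < rate f := by linarith
    have h2 : E < c u / 2 := lt_of_le_of_lt hES h
    linarith
  · have hE0 : E = 0 := by
      rw [hE, Finset.not_nonempty_iff_eq_empty.mp hne, Finset.sum_empty]
    have := hcap f u huU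
    rw [← hE, hE0] at hg1
    linarith
end

section
/- Under the assumptions that all VNF-nodes in U have the same capacity c and that every flow traverses at least two VNF-nodes in U, after the GCA algorithm, for every unassigned flow f and every pair of distinct nodes (u, v) in V_f ∩ U, the assigned traffic satisfies r_u + r_v ≥ (2/3)(c_u + c_v) = (4/3)c. -/
/-- Two-thirds lemma for the GCA algorithm under Assumption 1 (all VNF-nodes
in `U` have the same capacity `cc`, and every flow traverses at least two
VNF-nodes in `U`). Phase I assigns flows (in nonincreasing rate order) wholly
via `asg`; `r` records the final node loads after Phase II (which may only add
traffic, up to capacity). For any finally-unassigned flow `f` and any pair of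
distinct nodes `u, v` on its path within `U`, `r u + r v ≥ (2/3)(cc + cc)`. -/
theorem gca_two_thirds_capacity {V : Type} [Fintype V] [DecidableEq V] (n : ℕ)
    (rate : Fin n → ℝ) (cc : ℝ) (path : Fin n → Finset V) (U : Finset V)
    (asg : Fin n → Option V) (r : V → ℝ) (unassigned : Fin n → Prop)
    (hrate0 : ∀ f, 0 ≤ rate f)
    -- flows are listed in nonincreasing order of their rates
    (hmono : ∀ i j : Fin n, i ≤ j → rate j ≤ rate i)
    -- every flow rate is at most the (common) node capacity
    (hcap : ∀ f : Fin n, rate f ≤ cc)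
    -- every flow traverses at least two VNF-nodes in U
    (htwo : ∀ f : Fin n, 2 ≤ (path f ∩ U).card)
    -- Phase I assignments go only to path nodes within U
    (hasg : ∀ f u, asg f = some u → u ∈ path f ∩ U)
    -- greedy property of Phase I: an unassigned flow did not fit on any of
    -- its path nodes at its turn
    (hgreedy : ∀ f : Fin n, asg f = none → ∀ u ∈ path f ∩ U,
      cc < (∑ g ∈ Finset.univ.filter (fun g => g < f ∧ asg g = some u), rate g)
             + rate f)
    -- final loads dominate the Phase I loads and respect the capacity
    (hr_lb : ∀ u ∈ U,
      (∑ g ∈ Finset.univ.filter (fun g => asg g = some u), rate g) ≤ r u)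
    (hr_ub : ∀ u ∈ U, r u ≤ cc)
    -- finally-unassigned flows were unassigned in Phase I
    (hun1 : ∀ f, unassigned f → asg f = none)
    -- Phase II failure: a finally-unassigned flow exceeds the combined
    -- remaining capacity of its path nodes in U
    (hun2 : ∀ f, unassigned f → (∑ u ∈ path f ∩ U, (cc - r u)) < rate f) :
    ∀ f : Fin n, unassigned f → ∀ u ∈ path f ∩ U, ∀ v ∈ path f ∩ U, u ≠ v →
      (2 / 3) * (cc + cc) ≤ r u + r v := by
  intro f hf u hu v hv huv
  have huU : u ∈ U := (Finset.mem_inter.mp hu).2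
  have hvU : v ∈ U := (Finset.mem_inter.mp hv).2
  by_cases hc : rate f ≤ 2 / 3 * cc
  · -- small rate: use Phase II failure
    have hsub : ({u, v} : Finset V) ⊆ path f ∩ U := by
      intro x hx
      rcases Finset.mem_insert.mp hx with h | h
      · exact h ▸ hu
      · exact (Finset.mem_singleton.mp h) ▸ hv
    have hle : ∑ w ∈ ({u, v} : Finset V), (cc - r w)
        ≤ ∑ w ∈ path f ∩ U, (cc - r w) := by
      apply Finset.sum_le_sum_of_subset_of_nonneg hsub
      intro w hw _
      have := hr_ub w (Finset.mem_inter.mp hw).2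
      linarith
    rw [Finset.sum_pair huv] at hle
    have := hun2 f hf
    linarith
  · -- large rate: each of u, v already carries a flow of rate ≥ rate f
    push_neg at hc
    have key : ∀ w, w ∈ path f ∩ U → 2 / 3 * cc < r w := by
      intro w hw
      have hg := hgreedy f (hun1 f hf) w hw
      set S := ∑ g ∈ Finset.univ.filter (fun g => g < f ∧ asg g = some w), rate g with hS
      have hSpos : 0 < S := by
        have := hcap f
        linarith
      have hne : (Finset.univ.filter (fun g => g < f ∧ asg g = some w)).Nonempty := by
        by_contra h
        rw [Finset.not_nonempty_iff_eq_empty] at h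
        rw [hS, h, Finset.sum_empty] at hSpos
        exact lt_irrefl _ hSpos
      obtain ⟨g₀, hg₀⟩ := hne
      have hg₀' := Finset.mem_filter.mp hg₀
      have hrg₀ : rate f ≤ rate g₀ := hmono g₀ f (le_of_lt hg₀'.2.1)
      have hS_ge : rate g₀ ≤ S :=
        Finset.single_le_sum (fun g _ => hrate0 g) hg₀
      have hsub : (Finset.univ.filter (fun g => g < f ∧ asg g = some w))
          ⊆ Finset.univ.filter (fun g => asg g = some w) := by
        intro g hg
        simp only [Finset.mem_filter] at *
        exact ⟨hg.1, hg.2.2⟩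
      have hS_le : S ≤ ∑ g ∈ Finset.univ.filter (fun g => asg g = some w), rate g :=
        Finset.sum_le_sum_of_subset_of_nonneg hsub (fun g _ _ => hrate0 g)
      have := hr_lb w (Finset.mem_inter.mp hw).2
      linarith
    have h1 := key u hu
    have h2 := key v hv
    linarith
end

section
/- MCA rounding loss bound: suppose Phase I of the MCA algorithm performs m ≤ |V| executions of Step 1, and in the i-th execution the value of the solution decreases by at most r_{v_i}/2, where r_{v_i} is the total traffic assigned to node v_i in the basic optimal solution and Σ_{i=1}^m r_{v_i} ≤ OPT(Q2, U), while Step 2 never changes the total assigned traffic. Then the total traffic π assigned by MCA satisfies π ≥ (1/2)·OPT(Q2, U). -/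
/-- MCA rounding loss bound: Phase I performs `m ≤ |V|` executions of Step 1,
the `i`-th decreasing the solution value by at most `r_{v_i}/2`, where
`Σ r_{v_i} ≤ OPT(Q2,U)`; Step 2 never changes the value (so is not modeled as
a loss).  The final value, and hence the MCA output `π`, is at least
`OPT(Q2,U)/2`. -/
theorem mca_rounding_loss (nV m : ℕ) (hm : m ≤ nV) (OPT : ℝ)
    (r : Fin m → ℝ) (val : Fin (m + 1) → ℝ) (pi : ℝ)
    (hr0 : ∀ i, 0 ≤ r i)
    (hsum : ∑ i, r i ≤ OPT)
    (hval0 : val 0 = OPT)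
    (hstep : ∀ i : Fin m, val i.castSucc - r i / 2 ≤ val i.succ)
    (hpi : val (Fin.last m) ≤ pi) :
    OPT / 2 ≤ pi := by
  have key : ∀ k : Fin (m + 1),
      OPT - (∑ i ∈ Finset.univ.filter (fun i : Fin m => (i : ℕ) < (k : ℕ)), r i) / 2 ≤ val k := by
    intro k
    induction k using Fin.induction with
    | zero => simp [hval0]
    | succ j ih =>
      have h1 := hstep j
      have hset : Finset.univ.filter (fun i : Fin m => (i : ℕ) < (j.succ : ℕ))
          = insert j (Finset.univ.filter (fun i : Fin m => (i : ℕ) < (j.castSucc : ℕ))) := by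
        ext i
        simp only [Finset.mem_filter, Finset.mem_insert, Finset.mem_univ, true_and,
          Fin.ext_iff, Fin.coe_castSucc, Fin.val_succ]
        omega
      rw [hset, Finset.sum_insert (by simp)]
      have := ih
      linarith
  have hlast := key (Fin.last m)
  have hfull : Finset.univ.filter (fun i : Fin m => (i : ℕ) < (Fin.last m : ℕ)) = Finset.univ := by
    ext i; simp [i.isLt]
  rw [hfull] at hlast
  linarith
end

section
/- Greedy gives a (1 − 1/e)-approximation for maximizing a monotone nondecreasing submodular function f : 2^V → ℝ≥0 with f(∅) = 0 under a cardinality constraint |U| ≤ k: the set G_k produced by iteratively adding an element of maximum marginal gain satisfies f(G_k) ≥ (1 − (1 − 1/k)^k)·max_{|U| ≤ k} f(U) ≥ (1 − 1/e)·max_{|U| ≤ k} f(U). -/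
lemma sum_marginal_aux {V : Type} [DecidableEq V] (f : Finset V → ℝ)
    (hmono : ∀ A B : Finset V, A ⊆ B → f A ≤ f B)
    (hsub : ∀ A B : Finset V, ∀ v : V, A ⊆ B → v ∉ B →
      f (insert v B) - f B ≤ f (insert v A) - f A)
    (S U : Finset V) :
    f (S ∪ U) - f S ≤ ∑ v ∈ U, (f (insert v S) - f S) := by
  induction U using Finset.induction_on with
  | empty => simp
  | @insert v U hv ih =>
    rw [Finset.sum_insert hv, Finset.union_insert]
    have key : f (insert v (S ∪ U)) - f (S ∪ U) ≤ f (insert v S) - f S := by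
      by_cases hvSU : v ∈ S ∪ U
      · rw [Finset.insert_eq_self.2 hvSU]
        have := hmono S (insert v S) (Finset.subset_insert _ _)
        linarith
      · exact hsub S (S ∪ U) v Finset.subset_union_left hvSU
    linarith

/-- Nemhauser–Wolsey–Fisher guarantee: the greedy algorithm for maximizing a
monotone nondecreasing submodular function `f` with `f(∅) = 0` under a
cardinality constraint `|U| ≤ k` satisfies
`f(G_k) ≥ (1 − (1 − 1/k)^k)·max_{|U|≤k} f(U) ≥ (1 − 1/e)·max_{|U|≤k} f(U)`. -/
theorem greedy_submodular_cardinality {V : Type} [Fintype V] [DecidableEq V]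
    (f : Finset V → ℝ)
    (hnonneg : ∀ U : Finset V, 0 ≤ f U)
    (hempty : f ∅ = 0)
    (hmono : ∀ A B : Finset V, A ⊆ B → f A ≤ f B)
    (hsub : ∀ A B : Finset V, ∀ v : V, A ⊆ B → v ∉ B →
      f (insert v B) - f B ≤ f (insert v A) - f A)
    (G : ℕ → Finset V)
    (hG0 : G 0 = ∅)
    (hGstep : ∀ i : ℕ, ∃ v : V, G (i + 1) = insert v (G i) ∧
      ∀ w : V, f (insert w (G i)) ≤ f (insert v (G i)))
    (k : ℕ) (hk : 1 ≤ k) :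
    ∀ U : Finset V, U.card ≤ k →
      (1 - (1 - 1 / (k : ℝ)) ^ k) * f U ≤ f (G k) ∧
      (1 - 1 / Real.exp 1) * f U ≤ f (G k) := by
  intro U hU
  have hk1 : (1 : ℝ) ≤ (k : ℝ) := by exact_mod_cast hk
  have hkpos : (0 : ℝ) < (k : ℝ) := by linarith
  have hr0 : (0 : ℝ) ≤ 1 - 1 / (k : ℝ) := by
    have : 1 / (k : ℝ) ≤ 1 := by
      rw [div_le_one hkpos]; exact hk1
    linarith
  -- main induction
  have main : ∀ i : ℕ, f U - f (G i) ≤ (1 - 1 / (k : ℝ)) ^ i * f U := by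
    intro i
    induction i with
    | zero => simp [hG0, hempty]
    | succ i ih =>
      obtain ⟨v, hGv, hmax⟩ := hGstep i
      set g := f (G (i + 1)) - f (G i) with hg
      have hgain : ∀ w ∈ U, f (insert w (G i)) - f (G i) ≤ g := by
        intro w _
        have := hmax w
        rw [hg, hGv]
        linarith
      have hsum : f (G i ∪ U) - f (G i) ≤ ∑ v ∈ U, (f (insert v (G i)) - f (G i)) :=
        sum_marginal_aux f hmono hsub _ _
    -- bound sum by card * g
      have hgnn : 0 ≤ g := by
        rw [hg, hGv]
        have := hmono (G i) (insert v (G i)) (Finset.subset_insert _ _)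
        linarith
      have hsum2 : ∑ v ∈ U, (f (insert v (G i)) - f (G i)) ≤ (U.card : ℝ) * g := by
        calc ∑ v ∈ U, (f (insert v (G i)) - f (G i)) ≤ ∑ _v ∈ U, g :=
              Finset.sum_le_sum hgain
          _ = (U.card : ℝ) * g := by rw [Finset.sum_const, nsmul_eq_mul]
      have hcard : (U.card : ℝ) ≤ (k : ℝ) := by exact_mod_cast hU
      have hUG : f U ≤ f (G i ∪ U) := hmono _ _ Finset.subset_union_right
      have hstep : f U - f (G i) ≤ (k : ℝ) * g := by
        have : (U.card : ℝ) * g ≤ (k : ℝ) * g := by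
          exact mul_le_mul_of_nonneg_right hcard hgnn
        linarith
      have hdiv : (f U - f (G i)) / (k : ℝ) ≤ g := by
        rw [div_le_iff₀ hkpos]
        linarith [hstep]
      have : f U - f (G (i + 1)) ≤ (1 - 1 / (k : ℝ)) * (f U - f (G i)) := by
        have h1 : f U - f (G (i + 1)) = (f U - f (G i)) - g := by rw [hg]; ring
        rw [h1]
        have h2 : (1 - 1 / (k : ℝ)) * (f U - f (G i))
            = (f U - f (G i)) - (f U - f (G i)) / (k : ℝ) := by ring
        rw [h2]
        linarith
      calc f U - f (G (i + 1)) ≤ (1 - 1 / (k : ℝ)) * (f U - f (G i)) := this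
        _ ≤ (1 - 1 / (k : ℝ)) * ((1 - 1 / (k : ℝ)) ^ i * f U) :=
            mul_le_mul_of_nonneg_left ih hr0
        _ = (1 - 1 / (k : ℝ)) ^ (i + 1) * f U := by ring
  have h1 : (1 - (1 - 1 / (k : ℝ)) ^ k) * f U ≤ f (G k) := by
    have := main k
    nlinarith [this]
  refine ⟨h1, ?_⟩
  -- (1 - 1/k)^k ≤ 1 / exp 1
  have hexp : (1 - 1 / (k : ℝ)) ^ k ≤ 1 / Real.exp 1 := by
    have h2 : 1 - 1 / (k : ℝ) ≤ Real.exp (-(1 / (k : ℝ))) := by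
      have := Real.add_one_le_exp (-(1 / (k : ℝ)))
      linarith
    calc (1 - 1 / (k : ℝ)) ^ k ≤ (Real.exp (-(1 / (k : ℝ)))) ^ k :=
          pow_le_pow_left₀ hr0 h2 k
      _ = Real.exp ((k : ℝ) * (-(1 / (k : ℝ)))) := by
          rw [← Real.exp_nat_mul]
      _ = Real.exp (-1) := by
          congr 1
          field_simp
      _ = 1 / Real.exp 1 := by
          rw [Real.exp_neg]; ring
  have := hnonneg U
  nlinarith [h1, hexp, this]
end

section
/- For the three-node example (nodes of capacity 3, flows of rate 2 with paths {v₁,v₂}, {v₂,v₃}, {v₁,v₃}), the optimal-allocation value function J₃ is 2/3-weakly submodular but not γ-weakly submodular for any γ > 2/3, where γ-weak submodularity requires Σ_{v ∈ B} (J₃(A ∪ {v}) − J₃(A)) ≥ γ (J₃(A ∪ B) − J₃(A)) for all disjoint A, B. -/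
/-! A served flow draws its whole rate `2` from the nodes of `U`, whose total capacity is `3 |U|`,
so at most `min 3 ⌊3 |U| / 2⌋` of the three flows are served. A single node serves one flow, and
two or more nodes serve all three once every flow is split evenly over its nodes in `U`. Hence
`J₃(U)` is `0, 2, 6, 6` for `|U| = 0, 1, 2, 3`, a function of `|U|` alone, and the smallest ratio
of summed marginal gains to joint gain is `(2 + 2) / 6 = 2 / 3`, at `A = ∅`, `|B| = 2`. -/

open Finset

namespace J3

variable {V F : Type} [DecidableEq V]

section values

variable [Fintype F]

def values (c : V → ℝ) (rate : F → ℝ) (path : F → Finset V) (U : Finset V) : Set ℝ :=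
  {x : ℝ | ∃ a : F → V → ℝ,
    (∀ f v, 0 ≤ a f v) ∧
    (∀ f v, v ∉ path f ∩ U → a f v = 0) ∧
    (∀ v ∈ U, ∑ f, a f v ≤ c v) ∧
    x = ∑ f, if rate f ≤ ∑ v ∈ path f ∩ U, a f v then rate f else 0}

theorem eq_sSup_values [Fintype V] (c : V → ℝ) (rate : F → ℝ) (path : F → Finset V)
    (U : Finset V) : J3 c rate path U = sSup (values c rate path U) :=
  rfl

variable {c : V → ℝ} {rate : F → ℝ} {path : F → Finset V} {U : Finset V}

theorem values_nonempty (hc : ∀ v ∈ U, 0 ≤ c v) : (values c rate path U).Nonempty :=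
  ⟨_, fun _ _ => 0, fun _ _ => le_rfl, fun _ _ _ => rfl, fun v hv => by simpa using hc v hv,
    rfl⟩

theorem exists_served_of_mem_values {x : ℝ} (hx : x ∈ values c rate path U) :
    ∃ S : Finset F, x = ∑ f ∈ S, rate f ∧ ∑ f ∈ S, rate f ≤ ∑ v ∈ U, c v := by
  obtain ⟨a, ha0, -, hcap, rfl⟩ := hx
  set S := univ.filter fun f => rate f ≤ ∑ v ∈ path f ∩ U, a f v
  refine ⟨S, by rw [sum_filter], ?_⟩
  calc ∑ f ∈ S, rate f ≤ ∑ f ∈ S, ∑ v ∈ path f ∩ U, a f v :=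
        sum_le_sum fun f hf => (mem_filter.mp hf).2
    _ ≤ ∑ f ∈ S, ∑ v ∈ U, a f v :=
        sum_le_sum fun f _ => sum_le_sum_of_subset_of_nonneg inter_subset_right
          fun v _ _ => ha0 f v
    _ ≤ ∑ f, ∑ v ∈ U, a f v :=
        sum_le_sum_of_subset_of_nonneg (subset_univ S) fun f _ _ => sum_nonneg fun v _ => ha0 f v
    _ = ∑ v ∈ U, ∑ f, a f v := sum_comm
    _ ≤ ∑ v ∈ U, c v := sum_le_sum hcap

theorem sum_rate_le_J3 [Fintype V] (hbdd : BddAbove (values c rate path U))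
    (hrate : ∀ f, 0 ≤ rate f) {a : F → V → ℝ} (ha0 : ∀ f v, 0 ≤ a f v)
    (hsupp : ∀ f v, v ∉ path f ∩ U → a f v = 0) (hcap : ∀ v ∈ U, ∑ f, a f v ≤ c v)
    {S : Finset F} (hS : ∀ f ∈ S, rate f ≤ ∑ v ∈ path f ∩ U, a f v) :
    ∑ f ∈ S, rate f ≤ J3 c rate path U := by
  refine le_csSup_of_le hbdd ⟨a, ha0, hsupp, hcap, rfl⟩ ?_
  calc ∑ f ∈ S, rate f
        = ∑ f ∈ S, if rate f ≤ ∑ v ∈ path f ∩ U, a f v then rate f else 0 :=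
        sum_congr rfl fun f hf => (if_pos (hS f hf)).symm
    _ ≤ _ := sum_le_sum_of_subset_of_nonneg (subset_univ S) fun f _ _ => by
        split_ifs
        exacts [hrate f, le_rfl]

end values

section evenSplit

variable [DecidableEq F]

noncomputable def evenSplit (rate : F → ℝ) (path : F → Finset V) (S : Finset F) (U : Finset V)
    (f : F) (v : V) : ℝ :=
  if f ∈ S ∧ v ∈ path f ∩ U then rate f / #(path f ∩ U) else 0

variable {rate : F → ℝ} {path : F → Finset V} {S : Finset F} {U : Finset V}

theorem evenSplit_nonneg (hrate : ∀ f, 0 ≤ rate f) (f : F) (v : V) :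
    0 ≤ evenSplit rate path S U f v := by
  unfold evenSplit; split_ifs
  exacts [div_nonneg (hrate f) (Nat.cast_nonneg _), le_rfl]

theorem evenSplit_eq_zero {f : F} {v : V} (hv : v ∉ path f ∩ U) :
    evenSplit rate path S U f v = 0 :=
  if_neg fun h => hv h.2

theorem sum_evenSplit {f : F} (hf : f ∈ S) (hU : (path f ∩ U).Nonempty) :
    ∑ v ∈ path f ∩ U, evenSplit rate path S U f v = rate f := by
  have hsplit : ∀ v ∈ path f ∩ U, evenSplit rate path S U f v = rate f / #(path f ∩ U) :=
    fun v hv => if_pos ⟨hf, hv⟩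
  rw [sum_congr rfl hsplit, sum_const, nsmul_eq_mul]
  field_simp [hU.card_pos.ne']

end evenSplit

end J3

def WeaklySubmodularWith {α : Type*} [DecidableEq α] (γ : ℝ) (J : Finset α → ℝ) : Prop :=
  ∀ A B : Finset α, Disjoint A B →
    γ * (J (A ∪ B) - J A) ≤ ∑ v ∈ B, (J (insert v A) - J A)

theorem weaklySubmodularWith_card_comp {α : Type*} [Fintype α] [DecidableEq α] {γ : ℝ}
    {g : ℕ → ℝ}
    (hg : ∀ a b, a + b ≤ Fintype.card α → γ * (g (a + b) - g a) ≤ b * (g (a + 1) - g a)) :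
    WeaklySubmodularWith γ fun U : Finset α => g #U := by
  intro A B hAB
  beta_reduce
  have hmarg : ∀ v ∈ B, g #(insert v A) - g #A = g (#A + 1) - g #A := fun v hv => by
    rw [card_insert_of_notMem (disjoint_right.mp hAB hv)]
  rw [sum_congr rfl hmarg, sum_const, nsmul_eq_mul, card_union_of_disjoint hAB]
  exact hg _ _ (card_union_of_disjoint hAB ▸ card_le_univ _)

def trianglePath : Fin 3 → Finset (Fin 3) := ![{0, 1}, {1, 2}, {0, 2}]

noncomputable def triangleValue (k : ℕ) : ℝ := 2 * (min 3 (3 * k / 2) : ℕ)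

theorem triangle_values_le {U : Finset (Fin 3)} {x : ℝ}
    (hx : x ∈ J3.values (fun _ => 3) (fun _ => 2) trianglePath U) : x ≤ triangleValue #U := by
  obtain ⟨S, rfl, hcap⟩ := J3.exists_served_of_mem_values hx
  simp only [sum_const, nsmul_eq_mul] at hcap ⊢
  have hS : #S ≤ 3 := card_le_univ S
  have hSU : 2 * #S ≤ 3 * #U := by exact_mod_cast (by linarith : (2 : ℝ) * #S ≤ 3 * #U)
  unfold triangleValue
  have : #S ≤ min 3 (3 * #U / 2) := by omega
  rw [mul_comm]; gcongr

theorem triangle_exists_allocation (U : Finset (Fin 3)) :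
    ∃ S : Finset (Fin 3), #S = min 3 (3 * #U / 2) ∧
      (∀ f ∈ S, (trianglePath f ∩ U).Nonempty) ∧
      ∀ v ∈ U, ∑ f, J3.evenSplit (fun _ => 2) trianglePath S U f v ≤ 3 := by
  obtain hU | hU | hU : #U = 0 ∨ #U = 1 ∨ 2 ≤ #U := by omega
  · refine ⟨∅, by simp [hU], by simp, fun v hv => by simp_all⟩
  · obtain ⟨w, rfl⟩ := card_eq_one.mp hU
    refine ⟨{w}, by simp, ?_, ?_⟩ <;> fin_cases w <;>
      simp [J3.evenSplit, Fin.sum_univ_three, trianglePath] <;> norm_num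
  · have hmeet : ∀ f, (trianglePath f ∩ U).Nonempty := by
      revert U; decide
    refine ⟨univ, by simp only [card_univ, Fintype.card_fin]; omega, fun f _ => hmeet f,
      fun v hv => ?_⟩
    obtain rfl | rfl | rfl | rfl : U = univ ∨ U = {1, 2} ∨ U = {0, 2} ∨ U = {0, 1} := by
      clear hmeet hv; revert U; decide
    all_goals
      fin_cases v <;> simp_all [J3.evenSplit, Fin.sum_univ_three, trianglePath] <;> norm_num

theorem J3_triangle_eq_triangleValue (U : Finset (Fin 3)) :
    J3 (fun _ => 3) (fun _ => 2) trianglePath U = triangleValue #U := by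
  have hbdd : BddAbove (J3.values (fun _ => 3) (fun _ => 2) trianglePath U) :=
    ⟨_, fun _ hx => triangle_values_le hx⟩
  refine le_antisymm ?_ ?_
  · rw [J3.eq_sSup_values]
    exact csSup_le (J3.values_nonempty fun _ _ => by norm_num) fun _ hx => triangle_values_le hx
  obtain ⟨S, hS, hmeet, hload⟩ := triangle_exists_allocation U
  have hrate : ∀ f : Fin 3, (0 : ℝ) ≤ 2 := fun _ => zero_le_two
  have := J3.sum_rate_le_J3 hbdd hrate (J3.evenSplit_nonneg hrate)
    (fun _ _ => J3.evenSplit_eq_zero) hload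
    fun f hf => (J3.sum_evenSplit (rate := fun _ => (2 : ℝ)) hf (hmeet f hf)).ge
  simpa [hS, triangleValue, mul_comm] using this

theorem triangleValue_two_thirds_ineq (a b : ℕ) (hab : a + b ≤ 3) :
    2 / 3 * (triangleValue (a + b) - triangleValue a) ≤
      b * (triangleValue (a + 1) - triangleValue a) := by
  have ha : a ≤ 3 := by omega
  have hb : b ≤ 3 := by omega
  interval_cases a <;> interval_cases b <;> norm_num [triangleValue]

/-- For the triangle instance (nodes of capacity 3, flows of rate 2 with paths
{v₁,v₂}, {v₂,v₃}, {v₁,v₃}), `J₃` is 2/3-weakly submodular but not γ-weakly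
submodular for any γ > 2/3, where γ-weak submodularity requires
`Σ_{v ∈ B} (J₃(A ∪ {v}) − J₃(A)) ≥ γ (J₃(A ∪ B) − J₃(A))` for all
disjoint `A, B`. -/
theorem J3_weak_submodularity_two_thirds :
    let c : Fin 3 → ℝ := fun _ => 3
    let rate : Fin 3 → ℝ := fun _ => 2
    let path : Fin 3 → Finset (Fin 3) := ![{0, 1}, {1, 2}, {0, 2}]
    let J : Finset (Fin 3) → ℝ := J3 c rate path
    (∀ A B : Finset (Fin 3), Disjoint A B →
      (2 / 3) * (J (A ∪ B) - J A) ≤ ∑ v ∈ B, (J (insert v A) - J A)) ∧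
    (∀ γ : ℝ, γ > 2 / 3 →
      ¬ ∀ A B : Finset (Fin 3), Disjoint A B →
        γ * (J (A ∪ B) - J A) ≤ ∑ v ∈ B, (J (insert v A) - J A)) := by
  intro c rate path J
  have hJ : J = fun U => triangleValue #U := funext J3_triangle_eq_triangleValue
  refine ⟨hJ ▸ weaklySubmodularWith_card_comp triangleValue_two_thirds_ineq,
    fun γ hγ h => ?_⟩
  have hpair := h ∅ {0, 1} (disjoint_empty_left _)
  have : γ * (2 * 3) ≤ 2 * 2 := by simpa [hJ, triangleValue] using hpair
  linarith
end
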